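/- arXiv:2405.15454 — 2 statements merged into one kernel-verified Lean document; each statement's English description precedes it below -/
import Mathlib

section
/- Let d ≥ 1, let W ∈ ℝ^d with W ≠ 0, let x ∈ ℝ^d, let ν : ℝ → ℝ be strictly monotone (strictly increasing or strictly decreasing), and let a, b ∈ ℝ satisfy ν(a) ≤ ν(b). Suppose ν(⟨W, x⟩) < ν(a). Then θ* = ((a − ⟨W, x⟩)/‖W‖²) · W belongs to the feasible set S = {θ ∈ ℝ^d : ν(a) ≤ ν(⟨W, x + θ⟩) ≤ ν(b)} and is the unique minimizer of θ ↦ ‖θ‖² over S. -/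
/-!
With `c = a - ⟪W, x⟫`, the constraint `ν a ≤ ν ⟪W, x + θ⟫` confines `θ` to the half-space
`⟪W, θ⟫ ≥ c` (or `≤ c` when `ν` is decreasing), and `θ* = (c / ‖W‖²) • W` is the foot of the
perpendicular from `0` to its boundary, which lies on `⟪W, x + θ*⟫ = a`. On the half-space
`⟪θ*, θ - θ*⟫ = c (⟪W, θ⟫ - c) / ‖W‖² ≥ 0`, so `‖θ‖² = ‖θ*‖² + 2⟪θ*, θ - θ*⟫ + ‖θ - θ*‖²`
exceeds `‖θ*‖²` unless `θ = θ*`.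
-/

open scoped RealInnerProductSpace

section InnerProductSpace

variable {E : Type*} [NormedAddCommGroup E] [InnerProductSpace ℝ E]

theorem norm_sq_lt_norm_sq_of_inner_sub_nonneg {u v : E} (h : 0 ≤ ⟪u, v - u⟫) (hne : v ≠ u) :
    ‖u‖ ^ 2 < ‖v‖ ^ 2 := by
  have hpos : 0 < ‖v - u‖ ^ 2 := pow_pos (norm_pos_iff.mpr (sub_ne_zero.mpr hne)) 2
  have hexpand := norm_add_sq_real u (v - u)
  rw [add_sub_cancel] at hexpand
  linarith

theorem inner_div_norm_sq_smul_self {W : E} (hW : W ≠ 0) (c : ℝ) :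
    ⟪W, (c / ‖W‖ ^ 2) • W⟫ = c := by
  have hW2 : ‖W‖ ^ 2 ≠ 0 := pow_ne_zero 2 (norm_ne_zero_iff.mpr hW)
  rw [real_inner_smul_right, real_inner_self_eq_norm_sq, div_mul_cancel₀ c hW2]

theorem norm_sq_div_norm_sq_smul_lt_of_mul_inner_sub_nonneg {W θ : E} (hW : W ≠ 0) {c : ℝ}
    (h : 0 ≤ c * (⟪W, θ⟫ - c)) (hne : θ ≠ (c / ‖W‖ ^ 2) • W) :
    ‖(c / ‖W‖ ^ 2) • W‖ ^ 2 < ‖θ‖ ^ 2 := by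
  refine norm_sq_lt_norm_sq_of_inner_sub_nonneg ?_ hne
  rw [real_inner_smul_left, inner_sub_right, inner_div_norm_sq_smul_self hW, div_mul_eq_mul_div]
  positivity

end InnerProductSpace

theorem sub_mul_sub_nonneg_of_strictMono_or_strictAnti {ν : ℝ → ℝ}
    (hν : StrictMono ν ∨ StrictAnti ν) {t a s : ℝ} (ht : ν t < ν a) (hs : ν a ≤ ν s) :
    0 ≤ (a - t) * (s - a) := by
  rcases hν with hmono | hanti
  · exact mul_nonneg (sub_nonneg.mpr (hmono.lt_iff_lt.mp ht).le)
      (sub_nonneg.mpr (hmono.le_iff_le.mp hs))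
  · exact mul_nonneg_of_nonpos_of_nonpos (sub_nonpos.mpr (hanti.lt_iff_gt.mp ht).le)
      (sub_nonpos.mpr (hanti.le_iff_ge.mp hs))

theorem stmt_1_general (d : ℕ)
    (W x : EuclideanSpace ℝ (Fin d)) (hW : W ≠ 0)
    (ν : ℝ → ℝ) (hν : StrictMono ν ∨ StrictAnti ν)
    (a b : ℝ) (hab : ν a ≤ ν b)
    (hx : ν ⟪W, x⟫ < ν a)
    (S : Set (EuclideanSpace ℝ (Fin d)))
    (hS : S = {θ : EuclideanSpace ℝ (Fin d) |
      ν a ≤ ν ⟪W, x + θ⟫ ∧ ν ⟪W, x + θ⟫ ≤ ν b})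
    (θstar : EuclideanSpace ℝ (Fin d))
    (hθ : θstar = ((a - ⟪W, x⟫) / ‖W‖ ^ 2) • W) :
    θstar ∈ S ∧ ∀ θ ∈ S, θ ≠ θstar → ‖θstar‖ ^ 2 < ‖θ‖ ^ 2 := by
  subst hS hθ
  have hscore : ⟪W, x + ((a - ⟪W, x⟫) / ‖W‖ ^ 2) • W⟫ = a := by
    rw [inner_add_right, inner_div_norm_sq_smul_self hW]
    ring
  refine ⟨⟨by rw [hscore], by rw [hscore]; exact hab⟩, ?_⟩
  rintro θ ⟨hlow, -⟩ hne
  refine norm_sq_div_norm_sq_smul_lt_of_mul_inner_sub_nonneg hW ?_ hne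
  have h := sub_mul_sub_nonneg_of_strictMono_or_strictAnti hν hx hlow
  rw [inner_add_right] at h
  linarith

/-- Theorem 1 (Optimal θ), case ν(Wᵀx) < α^min: the intervention
θ* = ((a − ⟨W,x⟩)/‖W‖²) W is feasible and is the unique minimizer of ‖θ‖²
over the feasible set S = {θ : ν(a) ≤ ν(⟨W, x+θ⟩) ≤ ν(b)}. -/
theorem stmt_1 (d : ℕ) (hd : 1 ≤ d)
    (W x : EuclideanSpace ℝ (Fin d)) (hW : W ≠ 0)
    (ν : ℝ → ℝ) (hν : StrictMono ν ∨ StrictAnti ν)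
    (a b : ℝ) (hab : ν a ≤ ν b)
    (hx : ν ⟪W, x⟫ < ν a)
    (S : Set (EuclideanSpace ℝ (Fin d)))
    (hS : S = {θ : EuclideanSpace ℝ (Fin d) |
      ν a ≤ ν ⟪W, x + θ⟫ ∧ ν ⟪W, x + θ⟫ ≤ ν b})
    (θstar : EuclideanSpace ℝ (Fin d))
    (hθ : θstar = ((a - ⟪W, x⟫) / ‖W‖ ^ 2) • W) :
    θstar ∈ S ∧ ∀ θ ∈ S, θ ≠ θstar → ‖θstar‖ ^ 2 < ‖θ‖ ^ 2 :=
  stmt_1_general d W x hW ν hν a b hab hx S hS θstar hθ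
end

section
/- Let d ≥ 1, let W ∈ ℝ^d with W ≠ 0, let x ∈ ℝ^d, let ν : ℝ → ℝ be strictly monotone (strictly increasing or strictly decreasing), and let a, b ∈ ℝ satisfy ν(a) ≤ ν(b). Define θ* ∈ ℝ^d piecewise by: θ* = ((b − ⟨W, x⟩)/‖W‖²) · W if ν(⟨W, x⟩) > ν(b); θ* = ((a − ⟨W, x⟩)/‖W‖²) · W if ν(⟨W, x⟩) < ν(a); and θ* = 0 otherwise. Then the intervened state satisfies the guarantee ν(a) ≤ ν(⟨W, x + θ*⟩) ≤ ν(b). -/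
open scoped RealInnerProductSpace

theorem inner_add_smul_div_norm_sq_self {E : Type*} [NormedAddCommGroup E]
    [InnerProductSpace ℝ E] {W : E} (hW : W ≠ 0) (x : E) (t : ℝ) :
    ⟪W, x + ((t - ⟪W, x⟫) / ‖W‖ ^ 2) • W⟫ = t := by
  have hW2 : ‖W‖ ^ 2 ≠ 0 := by positivity
  rw [inner_add_right, inner_smul_right, real_inner_self_eq_norm_sq]
  field_simp
  ring

theorem stmt_3_general (d : ℕ)
    (W x : EuclideanSpace ℝ (Fin d)) (hW : W ≠ 0)
    (ν : ℝ → ℝ)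
    (a b : ℝ) (hab : ν a ≤ ν b)
    (θstar : EuclideanSpace ℝ (Fin d))
    (hθ : θstar =
      if ν ⟪W, x⟫ > ν b then ((b - ⟪W, x⟫) / ‖W‖ ^ 2) • W
      else if ν ⟪W, x⟫ < ν a then ((a - ⟪W, x⟫) / ‖W‖ ^ 2) • W
      else 0) :
    ν a ≤ ν ⟪W, x + θstar⟫ ∧ ν ⟪W, x + θstar⟫ ≤ ν b := by
  subst hθ
  split_ifs with above below
  · rw [inner_add_smul_div_norm_sq_self hW]
    exact ⟨hab, le_rfl⟩
  · rw [inner_add_smul_div_norm_sq_self hW]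
    exact ⟨le_rfl, hab⟩
  · rw [add_zero]
    exact ⟨not_lt.mp below, not_lt.mp above⟩

/-- The LiSeCo guarantee: the piecewise intervention θ* always brings the
intervened state x + θ* into the allowed region ν(a) ≤ ν(⟨W, ·⟩) ≤ ν(b). -/
theorem stmt_3 (d : ℕ) (hd : 1 ≤ d)
    (W x : EuclideanSpace ℝ (Fin d)) (hW : W ≠ 0)
    (ν : ℝ → ℝ) (hν : StrictMono ν ∨ StrictAnti ν)
    (a b : ℝ) (hab : ν a ≤ ν b)
    (θstar : EuclideanSpace ℝ (Fin d))
    (hθ : θstar =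
      if ν ⟪W, x⟫ > ν b then ((b - ⟪W, x⟫) / ‖W‖ ^ 2) • W
      else if ν ⟪W, x⟫ < ν a then ((a - ⟪W, x⟫) / ‖W‖ ^ 2) • W
      else 0) :
    ν a ≤ ν ⟪W, x + θstar⟫ ∧ ν ⟪W, x + θstar⟫ ≤ ν b :=
  stmt_3_general d W x hW ν a b hab θstar hθ
end
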